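/- Let Q be a semi-Eulerian poset of rank r+1 and let s = ⌊r/2⌋. Then ĝ(Q,x) + (x-1)ĥ(Q,x) = x^{r+1} ĝ(Q,1/x) + Σ*_{k=r-s+1}^{r+1} (-1)^{r-k} binom(r+1,k) e_Q(0̂,1̂) x^k, where Σ* means that if r is odd there is an extra summand ½·(-1)^{r-k} binom(r+1,k) e_Q(0̂,1̂) x^k for k = r-s, and e_Q(0̂,1̂) = μ_Q(0̂,1̂) - (-1)^{r+1}. -/

import Mathlib

open Finset Polynomial

variable {α : Type*} [Fintype α] [PartialOrder α] [BoundedOrder α] [DecidableEq α]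
  [DecidableRel ((· ≤ ·) : α → α → Prop)] [DecidableRel ((· < ·) : α → α → Prop)]

/-- `ρ` is a rank function making `α` a graded poset of rank `d + 1`. -/
def IsGraded (ρ : α → ℕ) (d : ℕ) : Prop :=
  ρ ⊥ = 0 ∧ ρ ⊤ = d + 1 ∧ (∀ a b : α, a ⋖ b → ρ b = ρ a + 1) ∧
    ∀ a b : α, a < b → ρ a < ρ b

/-- `mu` is the Möbius function of the poset `α`. -/
def IsMobius (mu : α → α → ℤ) : Prop :=
  (∀ a : α, mu a a = 1) ∧
    ∀ a b : α, a < b → ∑ c ∈ Finset.univ.filter (fun c => a ≤ c ∧ c ≤ b), mu a c = 0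

/-- `hh q` and `g q` are the toric polynomials `ĥ([0̂,q], x)` and `ĝ([0̂,q], x)` of the lower
intervals, defined by Stanley's recursion.  Writing `ĥ([0̂,q],x) = ĥ_r + ĥ_{r-1} x + ⋯ + ĥ_0 x^r`
with `r = ρ(q) - 1`, the polynomial `ĝ` has coefficients `ĝ_k = ĥ_{r-k} - ĥ_{r-k+1}` for
`k ≤ ⌊r/2⌋` and `0` above. -/
def ToricPair (ρ : α → ℕ) (hh g : α → Polynomial ℤ) : Prop :=
  hh ⊥ = 1 ∧ g ⊥ = 1 ∧
  (∀ q : α, q ≠ ⊥ →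
    hh q = ∑ p ∈ Finset.univ.filter (· < q), g p * (X - 1) ^ (ρ q - 1 - ρ p)) ∧
  (∀ q : α, q ≠ ⊥ →
    (g q).coeff 0 = (hh q).coeff 0 ∧
    (∀ k, 1 ≤ k → k ≤ (ρ q - 1) / 2 → (g q).coeff k = (hh q).coeff k - (hh q).coeff (k - 1)) ∧
    (∀ k, (ρ q - 1) / 2 < k → (g q).coeff k = 0))

/-!
Write `ĥ_q`, `ĝ_q` for the toric polynomials of `[0̂, q]`. By strong induction on `q < 1̂` one
shows `x^{ρ q} ĝ_q(1/x) = ∑_{u ≤ q} ĝ_u (x - 1)^{ρ q - ρ u}`: substituting this for all `p < q`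
into the reflected recursion for `ĥ_q` and exchanging the sums, the coefficient of
`ĝ_u (x - 1)^{ρ q - ρ u}` becomes `∑_{u ≤ p < q} (-1)^{ρ q - ρ p}`, which the Möbius recursion
evaluates to `-1` except for `[u, q] = [0̂, 1̂]`, where the defect `e` appears. Hence `ĥ_q` is
palindromic for `q < 1̂`, and `ĥ_1̂ - x^r ĥ_1̂(1/x) = (-1)^r e (x - 1)^r` (Swartz).

The identity is then read off coefficientwise: `ĝ` is the truncation of `P = (1 - x) ĥ` at degree
`⌊r/2⌋`, and the symmetry defect of `ĥ` gives `P_k + P_{r+1-k} = (-1)^k C(r+1,k) e`, the middle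
coefficient `P_{⌈r/2⌉}` for odd `r`, and `e = 0` for even `r`.
-/

section Reflect

variable {R : Type*} [Ring R]

lemma reflect_sum {ι : Type*} (s : Finset ι) (f : ι → R[X]) (N : ℕ) :
    reflect N (∑ i ∈ s, f i) = ∑ i ∈ s, reflect N (f i) :=
  map_sum (AddMonoidHom.mk' (reflect N) fun p q => reflect_add p q N) f s

lemma natDegree_X_sub_one_pow_le (n : ℕ) : ((X - 1 : R[X]) ^ n).natDegree ≤ n := by
  simpa using natDegree_pow_le_of_le n (natDegree_sub_le_of_le natDegree_X_le natDegree_one.le)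

lemma reflect_X_sub_one_pow (n : ℕ) : reflect n ((X - 1 : R[X]) ^ n) = (1 - X) ^ n := by
  induction n with
  | zero => simp
  | succ n ih =>
    have h1 : (X - 1 : R[X]).natDegree ≤ 1 := by simpa using natDegree_X_sub_one_pow_le (R := R) 1
    rw [pow_succ, reflect_mul _ _ (natDegree_X_sub_one_pow_le n) h1, ih, pow_succ]
    simp [reflect_sub, reflect_one]

lemma natDegree_one_sub_X_le : (1 - X : R[X]).natDegree ≤ 1 :=
  (natDegree_sub_le_of_le natDegree_one.le natDegree_X_le).trans (by simp)

lemma reflect_one_sub_X_mul {p : R[X]} {m : ℕ} (hp : p.natDegree ≤ m) :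
    reflect (m + 1) ((1 - X) * p) = (X - 1) * reflect m p := by
  rw [add_comm, reflect_mul _ _ natDegree_one_sub_X_le hp]
  simp [reflect_sub, reflect_one]

lemma coeff_one_sub_X_mul_zero (p : R[X]) : ((1 - X) * p).coeff 0 = p.coeff 0 := by
  simp [sub_mul]

lemma coeff_one_sub_X_mul_succ (p : R[X]) (k : ℕ) :
    ((1 - X) * p).coeff (k + 1) = p.coeff (k + 1) - p.coeff k := by
  simp [sub_mul, coeff_X_mul]

lemma coeff_X_sub_one_pow (n k : ℕ) :
    ((X - 1 : R[X]) ^ n).coeff k = (-1) ^ (n - k) * n.choose k := by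
  simpa [sub_eq_add_neg] using coeff_X_add_C_pow (-1 : R) n k

end Reflect

section SymmetryDefect

variable {m : ℕ} {H : ℤ[X]} {ε : ℤ}

lemma neg_one_pow_mul_neg_one_pow_sub {k : ℕ} (hk : k ≤ m) :
    (-1 : ℤ) ^ m * (-1) ^ (m - k) = (-1) ^ k := by
  rw [← pow_add]
  exact neg_one_pow_congr (by simp only [Nat.even_iff]; omega)

lemma coeff_sub_coeff_sub_of_sub_reflect (hsym : H - reflect m H = C ((-1) ^ m * ε) * (X - 1) ^ m)
    {k : ℕ} (hk : k ≤ m) : H.coeff k - H.coeff (m - k) = (-1) ^ k * m.choose k * ε := by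
  have h := congrArg (coeff · k) hsym
  simp only [coeff_sub, coeff_reflect, revAt_le hk, coeff_C_mul, coeff_X_sub_one_pow] at h
  rw [h, ← neg_one_pow_mul_neg_one_pow_sub hk]
  ring

lemma eq_zero_of_sub_reflect_of_even (hsym : H - reflect m H = C ((-1) ^ m * ε) * (X - 1) ^ m)
    (hm : Even m) : ε = 0 := by
  obtain ⟨j, rfl⟩ := hm
  have h := coeff_sub_coeff_sub_of_sub_reflect hsym (k := j) (by omega)
  rw [show j + j - j = j by omega, sub_self] at h
  simpa [(Nat.choose_pos (show j ≤ j + j by omega)).ne'] using h.symm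

lemma coeff_one_sub_X_mul_add_coeff_sub_of_sub_reflect (hdeg : H.natDegree ≤ m)
    (hsym : H - reflect m H = C ((-1) ^ m * ε) * (X - 1) ^ m) {k : ℕ} (hk : k ≤ m + 1) :
    ((1 - X) * H).coeff k + ((1 - X) * H).coeff (m + 1 - k) = (-1) ^ k * (m + 1).choose k * ε := by
  have h : (1 - X) * H + reflect (m + 1) ((1 - X) * H)
      = -C ((-1) ^ m * ε) * (X - 1) ^ (m + 1) := by
    rw [reflect_one_sub_X_mul hdeg]
    linear_combination (1 - X) * hsym
  have h := congrArg (coeff · k) h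
  simp only [coeff_add, coeff_reflect, revAt_le hk, neg_mul, coeff_neg, coeff_C_mul,
    coeff_X_sub_one_pow] at h
  rw [h, ← neg_one_pow_mul_neg_one_pow_sub hk, pow_succ]
  ring

lemma coeff_one_sub_X_mul_half_of_sub_reflect
    (hsym : H - reflect m H = C ((-1) ^ m * ε) * (X - 1) ^ m) (hm : Odd m) :
    ((1 - X) * H).coeff (m - m / 2) = -((-1) ^ (m / 2) * m.choose (m / 2) * ε) := by
  obtain ⟨j, rfl⟩ := hm
  have h := coeff_sub_coeff_sub_of_sub_reflect hsym (k := j + 1) (by omega)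
  rw [show 2 * j + 1 - (j + 1) = j by omega, Nat.choose_symm_half] at h
  rw [show 2 * j + 1 - (2 * j + 1) / 2 = j + 1 by omega, show (2 * j + 1) / 2 = j by omega,
    coeff_one_sub_X_mul_succ, h, pow_succ]
  ring

theorem trunc_add_X_sub_one_mul_eq {G : ℤ[X]} (hdeg : H.natDegree ≤ m)
    (hsym : H - reflect m H = C ((-1) ^ m * ε) * (X - 1) ^ m)
    (hG : ∀ k, G.coeff k = if k ≤ m / 2 then ((1 - X) * H).coeff k else 0) :
    G + (X - 1) * H
      = reflect (m + 1) G
        + ∑ k ∈ Icc (m - m / 2 + 1) (m + 1),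
            C ((-1) ^ (m + k) * ((m + 1).choose k : ℤ) * ε) * X ^ k
        + (if Odd m then C ((-1) ^ (m / 2) * (m.choose (m / 2) : ℤ) * ε) * X ^ (m - m / 2)
          else 0) := by
  have hPsym (k : ℕ) (hk : k ≤ m + 1) :=
    coeff_one_sub_X_mul_add_coeff_sub_of_sub_reflect hdeg hsym hk
  have hPmid := coeff_one_sub_X_mul_half_of_sub_reflect hsym
  have hPdeg : ((1 - X) * H).natDegree ≤ m + 1 :=
    natDegree_mul_le.trans (by linarith [natDegree_one_sub_X_le (R := ℤ)])
  have hpar (k : ℕ) : (-1 : ℤ) ^ (m + k) * ε = -((-1) ^ k * ε) := by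
    rcases Nat.even_or_odd m with hm | hm
    · simp [eq_zero_of_sub_reflect_of_even hsym hm]
    · rw [pow_add, hm.neg_one_pow]
      ring
  set P := (1 - X) * H
  rw [show (X - 1) * H = -P by ring]
  ext k
  simp only [coeff_add, coeff_neg, coeff_reflect, finsetSum_coeff, coeff_C_mul_X_pow,
    sum_ite_eq, mem_Icc, apply_ite (coeff · k), coeff_zero, hG, Nat.odd_iff]
  rcases lt_or_ge (m + 1) k with hk | hk
  · rw [revAt_eq_self_of_lt hk, coeff_eq_zero_of_natDegree_lt (hPdeg.trans_lt hk)]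
    split_ifs <;> omega
  · rw [revAt_le hk]
    split_ifs <;> try omega
    any_goals linear_combination -hPsym k hk - ((m + 1).choose k : ℤ) * hpar k
    obtain rfl : k = m - m / 2 := ‹_›
    linear_combination -hPmid (Nat.odd_iff.mpr ‹_›)

end SymmetryDefect

lemma neg_one_pow_sub_eq_mul {a b c : ℕ} (hab : a ≤ b) (hbc : b ≤ c) :
    (-1 : ℤ) ^ (c - b) = (-1) ^ (c - a) * (-1) ^ (b - a) := by
  rw [← pow_add]
  exact neg_one_pow_congr (by simp only [Nat.even_iff]; omega)

omit [BoundedOrder α] in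
theorem IsMobius.sum_neg_one_pow_eq {mu : α → α → ℤ} (hmu : IsMobius mu) {ρ : α → ℕ}
    (hρ : Monotone ρ) {u q : α} (huq : u < q)
    (hE : ∀ c, u ≤ c → c < q → mu u c = (-1) ^ (ρ c - ρ u)) :
    ∑ p ∈ univ.filter (fun p => u ≤ p ∧ p < q), (-1 : ℤ) ^ (ρ q - ρ p)
      = -((-1) ^ (ρ q - ρ u) * mu u q) := by
  have hsplit : univ.filter (fun c => u ≤ c ∧ c ≤ q)
      = insert q (univ.filter (fun c => u ≤ c ∧ c < q)) := by
    ext c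
    simp only [mem_filter, mem_univ, true_and, mem_insert, le_iff_lt_or_eq (b := q)]
    constructor
    · rintro ⟨huc, hcq | rfl⟩ <;> simp_all
    · rintro (rfl | ⟨huc, hcq⟩) <;> simp_all [huq.le]
  have hsum := hmu.2 u q huq
  rw [hsplit, sum_insert (by simp)] at hsum
  have hterm : ∀ p ∈ univ.filter (fun p => u ≤ p ∧ p < q),
      (-1 : ℤ) ^ (ρ q - ρ p) = (-1) ^ (ρ q - ρ u) * mu u p := by
    intro p hp
    obtain ⟨hup, hpq⟩ := (mem_filter.mp hp).2
    rw [hE p hup hpq, neg_one_pow_sub_eq_mul (hρ hup) (hρ hpq.le)]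
  rw [sum_congr rfl hterm, ← mul_sum]
  linear_combination (-1 : ℤ) ^ (ρ q - ρ u) * hsum

namespace ToricPair

variable {ρ : α → ℕ} {hh g : α → ℤ[X]} {mu : α → α → ℤ}

omit [DecidableRel ((· ≤ ·) : α → α → Prop)] in
theorem natDegree_g_le (h : ToricPair ρ hh g) (q : α) : (g q).natDegree ≤ ρ q := by
  by_cases hq : q = ⊥
  · simp [hq, h.2.1]
  · exact natDegree_le_iff_coeff_eq_zero.mpr fun k hk => (h.2.2.2 q hq).2.2 k (by omega)

omit [DecidableEq α] [DecidableRel ((· ≤ ·) : α → α → Prop)] in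
theorem coeff_g (h : ToricPair ρ hh g) {q : α} (hq : q ≠ ⊥) (k : ℕ) :
    (g q).coeff k = if k ≤ (ρ q - 1) / 2 then ((1 - X) * hh q).coeff k else 0 := by
  obtain ⟨hzero, hsucc, hhigh⟩ := h.2.2.2 q hq
  split_ifs with hk
  · cases k with
    | zero => rw [hzero, coeff_one_sub_X_mul_zero]
    | succ k => rw [hsucc (k + 1) (by omega) hk, coeff_one_sub_X_mul_succ, Nat.add_sub_cancel]
  · exact hhigh k (by omega)

omit [DecidableRel ((· ≤ ·) : α → α → Prop)] in
theorem natDegree_hh_le (h : ToricPair ρ hh g) (hρ : StrictMono ρ) {q : α} (hq : q ≠ ⊥) :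
    (hh q).natDegree ≤ ρ q - 1 := by
  rw [h.2.2.1 q hq]
  refine natDegree_sum_le_of_forall_le _ _ fun p hp => natDegree_mul_le.trans ?_
  have := hρ (mem_filter.mp hp).2
  have := h.natDegree_g_le p
  have := natDegree_X_sub_one_pow_le (R := ℤ) (ρ q - 1 - ρ p)
  omega

omit [DecidableEq α] [DecidableRel ((· ≤ ·) : α → α → Prop)] in
theorem X_sub_one_mul_hh (h : ToricPair ρ hh g) (hρ : StrictMono ρ) {q : α} (hq : q ≠ ⊥) :
    (X - 1) * hh q = ∑ u ∈ univ.filter (· < q), g u * (X - 1) ^ (ρ q - ρ u) := by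
  rw [h.2.2.1 q hq, mul_sum]
  refine sum_congr rfl fun u hu => ?_
  rw [show ρ q - ρ u = ρ q - 1 - ρ u + 1 by have := hρ (mem_filter.mp hu).2; omega, pow_succ]
  ring

omit [DecidableRel ((· ≤ ·) : α → α → Prop)] in
theorem reflect_hh (h : ToricPair ρ hh g) (hρ : StrictMono ρ) {q : α} (hq : q ≠ ⊥) :
    reflect (ρ q - 1) (hh q)
      = ∑ p ∈ univ.filter (· < q), reflect (ρ p) (g p) * (1 - X) ^ (ρ q - 1 - ρ p) := by
  rw [h.2.2.1 q hq, reflect_sum]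
  refine sum_congr rfl fun p hp => ?_
  set d := ρ q - 1 - ρ p
  rw [show ρ q - 1 = ρ p + d by have := hρ (mem_filter.mp hp).2; omega,
    reflect_mul _ _ (h.natDegree_g_le p) (natDegree_X_sub_one_pow_le d), reflect_X_sub_one_pow]

theorem one_sub_X_mul_reflect_hh (h : ToricPair ρ hh g) (hρ : StrictMono ρ) {q : α} (hq : q ≠ ⊥)
    (hDS : ∀ p < q,
      reflect (ρ p) (g p) = ∑ u ∈ univ.filter (· ≤ p), g u * (X - 1) ^ (ρ p - ρ u)) :
    (1 - X) * reflect (ρ q - 1) (hh q)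
      = ∑ u ∈ univ.filter (· < q),
          C (∑ p ∈ univ.filter (fun p => u ≤ p ∧ p < q), (-1 : ℤ) ^ (ρ q - ρ p))
            * (g u * (X - 1) ^ (ρ q - ρ u)) := by
  calc (1 - X) * reflect (ρ q - 1) (hh q)
      = ∑ p ∈ univ.filter (· < q), reflect (ρ p) (g p) * (1 - X) ^ (ρ q - ρ p) := by
        rw [h.reflect_hh hρ hq, mul_sum]
        refine sum_congr rfl fun p hp => ?_
        rw [show ρ q - ρ p = ρ q - 1 - ρ p + 1 by have := hρ (mem_filter.mp hp).2; omega,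
          pow_succ]
        ring
    _ = ∑ p ∈ univ.filter (· < q), ∑ u ∈ univ.filter (· ≤ p),
          g u * (X - 1) ^ (ρ p - ρ u) * (1 - X) ^ (ρ q - ρ p) := by
        refine sum_congr rfl fun p hp => ?_
        rw [hDS p (mem_filter.mp hp).2, sum_mul]
    _ = ∑ u ∈ univ.filter (· < q), ∑ p ∈ univ.filter (fun p => u ≤ p ∧ p < q),
          g u * (X - 1) ^ (ρ p - ρ u) * (1 - X) ^ (ρ q - ρ p) := by
        refine sum_comm' fun p u => ?_
        simp only [mem_filter, mem_univ, true_and]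
        exact ⟨fun ⟨hpq, hup⟩ => ⟨⟨hup, hpq⟩, hup.trans_lt hpq⟩, fun ⟨⟨hup, hpq⟩, _⟩ => ⟨hpq, hup⟩⟩
    _ = _ := by
        refine sum_congr rfl fun u _ => ?_
        rw [map_sum, sum_mul]
        refine sum_congr rfl fun p hp => ?_
        obtain ⟨hup, hpq⟩ := (mem_filter.mp hp).2
        have hup' := hρ.monotone hup
        have hpq' := (hρ hpq).le
        rw [show (1 : ℤ[X]) - X = -(X - 1) by ring, neg_pow,
          show ρ q - ρ u = (ρ p - ρ u) + (ρ q - ρ p) by omega, pow_add]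
        simp only [map_pow, map_neg, map_one]
        ring


theorem hh_sub_reflect (h : ToricPair ρ hh g) (hρ0 : ρ ⊥ = 0) (hρ : StrictMono ρ)
    (hmu : IsMobius mu) {q : α} (hq : q ≠ ⊥)
    (hsemi : ∀ u c, u ≤ c → c ≤ q → ¬(u = ⊥ ∧ c = q) → mu u c = (-1) ^ (ρ c - ρ u))
    (hDS : ∀ p < q,
      reflect (ρ p) (g p) = ∑ u ∈ univ.filter (· ≤ p), g u * (X - 1) ^ (ρ p - ρ u)) :
    hh q - reflect (ρ q - 1) (hh q)
      = C ((-1) ^ (ρ q - 1) * (mu ⊥ q - (-1) ^ ρ q)) * (X - 1) ^ (ρ q - 1) := by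
  have hσ : ∀ u < q, ∑ p ∈ univ.filter (fun p => u ≤ p ∧ p < q), (-1 : ℤ) ^ (ρ q - ρ p)
      = -((-1) ^ (ρ q - ρ u) * mu u q) := fun u hu =>
    hmu.sum_neg_one_pow_eq hρ.monotone hu fun c huc hcq =>
      hsemi u c huc hcq.le fun h => hcq.ne h.2
  -- Only the coefficient of the term `u = ⊥` differs from `-1`.
  have hcorr : ∑ u ∈ univ.filter (· < q),
      (C (∑ p ∈ univ.filter (fun p => u ≤ p ∧ p < q), (-1 : ℤ) ^ (ρ q - ρ p)) + 1)
        * (g u * (X - 1) ^ (ρ q - ρ u))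
      = C (1 - (-1) ^ ρ q * mu ⊥ q) * (X - 1) ^ ρ q := by
    rw [sum_eq_single ⊥, hσ ⊥ (bot_lt_iff_ne_bot.mpr hq), h.2.1, hρ0]
    · simp only [Nat.sub_zero, map_neg, map_mul, map_sub, map_one]
      ring
    · intro u hu hub
      rw [hσ u (mem_filter.mp hu).2, hsemi u q (mem_filter.mp hu).2.le le_rfl fun h => hub h.1,
        pow_mul_pow_eq_one _ (by norm_num)]
      simp
    · simp [bot_lt_iff_ne_bot.mpr hq]
  have hcore := h.one_sub_X_mul_reflect_hh hρ hq hDS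
  simp only [add_mul, one_mul, sum_add_distrib, ← h.X_sub_one_mul_hh hρ hq] at hcorr
  obtain ⟨n, hn⟩ : ∃ n, ρ q = n + 1 := ⟨ρ q - 1, by have := hρ (bot_lt_iff_ne_bot.mpr hq); omega⟩
  have hκ : (-1 : ℤ) ^ n * (mu ⊥ q - (-1) ^ (n + 1)) = 1 - (-1) ^ (n + 1) * mu ⊥ q := by
    linear_combination (pow_mul_pow_eq_one n (by norm_num : (-1 : ℤ) * -1 = 1))
  rw [hn, Nat.add_sub_cancel, hκ]
  rw [hn, Nat.add_sub_cancel] at hcore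
  rw [hn] at hcorr
  have hX : (X - 1 : ℤ[X]) ≠ 0 := by simpa using X_sub_C_ne_zero (1 : ℤ)
  refine mul_left_cancel₀ hX ?_
  linear_combination hcore + hcorr

theorem reflect_g_eq_sum (h : ToricPair ρ hh g) (hρ0 : ρ ⊥ = 0) (hρ : StrictMono ρ)
    (hmu : IsMobius mu)
    (hsemi : ∀ a b, a ≤ b → ¬(a = ⊥ ∧ b = ⊤) → mu a b = (-1) ^ (ρ b - ρ a)) {q : α}
    (hq : q ≠ ⊤) :
    reflect (ρ q) (g q) = ∑ u ∈ univ.filter (· ≤ q), g u * (X - 1) ^ (ρ q - ρ u) := by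
  induction q using WellFoundedLT.induction with
  | _ q ih =>
  by_cases hqb : q = ⊥
  · subst hqb
    rw [show univ.filter (· ≤ (⊥ : α)) = {⊥} by ext; simp]
    simp [hρ0, h.2.1, reflect_one]
  have hsym := h.hh_sub_reflect hρ0 hρ hmu hqb
    (fun u c huc hcq _ => hsemi u c huc fun h => hq (top_le_iff.mp (h.2 ▸ hcq)))
    (fun p hp => ih p hp (hp.trans_le le_top).ne)
  rw [hsemi ⊥ q bot_le (fun h => hq h.2), hρ0, Nat.sub_zero, sub_self] at hsym
  have hid := trunc_add_X_sub_one_mul_eq (h.natDegree_hh_le hρ hqb) hsym (h.coeff_g hqb)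
  have hρq : 1 ≤ ρ q := by have := hρ (bot_lt_iff_ne_bot.mpr hqb); omega
  simp only [mul_zero, map_zero, zero_mul, sum_const_zero, add_zero, ite_self,
    Nat.sub_add_cancel hρq] at hid
  rw [show univ.filter (· ≤ q) = insert q (univ.filter (· < q)) by
      ext; simp [le_iff_lt_or_eq, or_comm],
    sum_insert (by simp), Nat.sub_self, pow_zero, mul_one, ← h.X_sub_one_mul_hh hρ hqb, hid]

end ToricPair

/-- for a semi-Eulerian poset `Q` of rank `r+1` with `s = ⌊r/2⌋` and
`e = μ(0̂,1̂) - (-1)^{r+1}`: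
`ĝ(Q,x) + (x-1)ĥ(Q,x) = x^{r+1} ĝ(Q,1/x) + ∑_{k=r-s+1}^{r+1} (-1)^{r-k} C(r+1,k) e x^k`,
with, when `r` is odd, the extra summand `½(-1)^{r-k} C(r+1,k) e x^k` at `k = r-s`
(whose integer coefficient is `(-1)^{⌊r/2⌋} C(r,⌊r/2⌋) e`). -/
theorem semi_eulerian_toric_identity (r : ℕ) (ρ : α → ℕ) (mu : α → α → ℤ)
    (hh g : α → Polynomial ℤ)
    (hgr : IsGraded ρ r) (hmu : IsMobius mu) (htoric : ToricPair ρ hh g)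
    (hsemi : ∀ a b : α, a ≤ b → ¬(a = ⊥ ∧ b = ⊤) → mu a b = (-1 : ℤ) ^ (ρ b - ρ a)) :
    g ⊤ + (X - 1) * hh ⊤
      = Polynomial.reflect (r + 1) (g ⊤)
        + ∑ k ∈ Finset.Icc (r - r / 2 + 1) (r + 1),
            Polynomial.C ((-1 : ℤ) ^ (r + k) * ((r + 1).choose k : ℤ)
              * (mu ⊥ ⊤ - (-1 : ℤ) ^ (r + 1))) * X ^ k
        + (if Odd r then
            Polynomial.C ((-1 : ℤ) ^ (r / 2) * (r.choose (r / 2) : ℤ)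
              * (mu ⊥ ⊤ - (-1 : ℤ) ^ (r + 1))) * X ^ (r - r / 2)
          else 0) := by
  obtain ⟨hρ0, hρtop, -, hlt⟩ := hgr
  have hρ : StrictMono ρ := fun a b => hlt a b
  have htop : (⊤ : α) ≠ ⊥ := fun h => by simp [h, hρ0] at hρtop
  have hsym := htoric.hh_sub_reflect hρ0 hρ hmu htop (fun u c huc _ => hsemi u c huc)
    fun p hp => htoric.reflect_g_eq_sum hρ0 hρ hmu hsemi hp.ne
  have hdeg := htoric.natDegree_hh_le hρ htop
  have hG := htoric.coeff_g htop
  rw [hρtop, Nat.add_sub_cancel] at hsym hdeg hG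
  exact trunc_add_X_sub_one_mul_eq hdeg hsym hG
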